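/- For any g with -g not a nonpositive integer and real w > 0, z, the expansion Φ₃(b; g; z, w) = Γ(g) · w^{(1−g)/2} · Σ_{j=0}^∞ (b)_j / j! · (z/√w)^j · I_{g+j−1}(2√w) holds, where I_ν is the modified Bessel function of the first kind. -/

import Mathlib

open Real MeasureTheory Filter

/-- Pochhammer symbol (rising factorial) for a real parameter. -/
noncomputable def poch (a : ℝ) (n : ℕ) : ℝ := ∏ i ∈ Finset.range n, (a + i)

/-- Modified Bessel function of the first kind of real order. -/
noncomputable def besselI (ν x : ℝ) : ℝ :=
  ∑' k : ℕ, (x / 2) ^ (2 * (k : ℝ) + ν) / (Real.Gamma (ν + k + 1) * (Nat.factorial k))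

/-- Generalized Marcum Q function of real order. -/
noncomputable def marcumQ (M α β : ℝ) : ℝ :=
  α ^ (1 - M) *
    ∫ x in Set.Ioi β, x ^ M * Real.exp (-(α ^ 2 + x ^ 2) / 2) * besselI (M - 1) (α * x)

/-- Confluent hypergeometric function of two variables Φ₃. -/
noncomputable def phi3 (b g w z : ℝ) : ℝ :=
  ∑' q : ℕ × ℕ,
    poch b q.1 / (poch g (q.1 + q.2) * (Nat.factorial q.1) * (Nat.factorial q.2)) *
      w ^ q.1 * z ^ q.2

/-- Confluent hypergeometric function of two variables Ψ₂. -/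
noncomputable def psi2 (a d d' w z : ℝ) : ℝ :=
  ∑' q : ℕ × ℕ,
    poch a (q.1 + q.2) / (poch d q.1 * poch d' q.2 * (Nat.factorial q.1) * (Nat.factorial q.2)) *
      w ^ q.1 * z ^ q.2

/-- Kummer confluent hypergeometric function ₁F₁ (real). -/
noncomputable def hyp1F1 (a b z : ℝ) : ℝ :=
  ∑' l : ℕ, poch a l / (poch b l * (Nat.factorial l)) * z ^ l

/-!
Summing Φ₃ first over the index `k` of `w`, row `j` is
`(b)_j z^j / j! · Σ_k w^k / ((g)_{j+k} k!)`. Since `(g)_{j+k} = Γ(g+j+k) / Γ(g)`, this row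
is the series of `I_{g+j-1}(2√w)` times `Γ(g) w^{(1-g)/2} (z/√w)^j`. Summing by rows is
legitimate because the double series converges absolutely: `(g)_n` outgrows every geometric
sequence (ratio test), while `|(b)_j| ≤ (|b|+1)^j j!`.
-/

open scoped Nat Topology

lemma poch_succ (a : ℝ) (n : ℕ) : poch a (n + 1) = poch a n * (a + n) :=
  Finset.prod_range_succ _ _

lemma poch_ne_zero {g : ℝ} (hg : ∀ n : ℕ, g ≠ -(n : ℝ)) (n : ℕ) : poch g n ≠ 0 :=
  Finset.prod_ne_zero_iff.2 fun i _ h => hg i (by linarith)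

lemma Gamma_add_natCast_eq_poch_mul {g : ℝ} (hg : ∀ n : ℕ, g ≠ -(n : ℝ)) (n : ℕ) :
    Gamma (g + n) = poch g n * Gamma g := by
  induction n with
  | zero => simp [poch]
  | succ n ih =>
    have hgn : g + n ≠ 0 := fun h => hg n (by linarith)
    rw [Nat.cast_succ, ← add_assoc, Gamma_add_one hgn, ih, poch_succ]
    ring

lemma abs_poch_le (b : ℝ) (j : ℕ) : |poch b j| ≤ (|b| + 1) ^ j * j ! := by
  rw [poch, Finset.abs_prod, ← Finset.prod_range_add_one_eq_factorial, Nat.cast_prod,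
    ← Finset.card_range j, ← Finset.prod_const, Finset.card_range, ← Finset.prod_mul_distrib]
  refine Finset.prod_le_prod (fun i _ => abs_nonneg _) fun i _ => ?_
  calc |b + i| ≤ |b| + i := by simpa using abs_add_le b (i : ℝ)
    _ ≤ (|b| + 1) * ((i + 1 : ℕ) : ℝ) := by
      push_cast
      nlinarith [abs_nonneg b, (i.cast_nonneg : (0 : ℝ) ≤ i)]

lemma tendsto_pow_div_poch {g : ℝ} (hg : ∀ n : ℕ, g ≠ -(n : ℝ)) {R : ℝ} (hR : R ≠ 0) :
    Tendsto (fun n => R ^ n / poch g n) atTop (𝓝 0) := by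
  refine Summable.tendsto_atTop_zero <| summable_of_ratio_test_tendsto_lt_one zero_lt_one
    (Eventually.of_forall fun n => div_ne_zero (pow_ne_zero n hR) (poch_ne_zero hg n)) ?_
  have hratio : ∀ n : ℕ,
      ‖R ^ (n + 1) / poch g (n + 1)‖ / ‖R ^ n / poch g n‖ = |R| / |g + n| := by
    intro n
    have hpoch := poch_ne_zero hg n
    simp only [norm_div, Real.norm_eq_abs, poch_succ, abs_mul, abs_pow, pow_succ]
    field_simp
  simp only [hratio]
  exact tendsto_const_nhds.div_atTop (tendsto_abs_atTop_atTop.comp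
    (tendsto_atTop_add_const_left _ g tendsto_natCast_atTop_atTop))

noncomputable def phi3Term (b g z w : ℝ) (j k : ℕ) : ℝ :=
  poch b j / (poch g (j + k) * j ! * k !) * z ^ j * w ^ k

lemma summable_phi3Term {g : ℝ} (hg : ∀ n : ℕ, g ≠ -(n : ℝ)) (b z w : ℝ) :
    Summable (Function.uncurry (phi3Term b g z w)) := by
  set B := (|b| + 1) * |z|
  set R := B + 1
  have hR : 0 < R := by positivity
  obtain ⟨C, hC⟩ := (tendsto_pow_div_poch hg hR.ne').abs.bddAbove_range
  have hBR : B / R < 1 := (div_lt_one hR).2 (lt_add_one B)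
  have hmajorant : Summable fun q : ℕ × ℕ => C * ((B / R) ^ q.1 * ((|w| / R) ^ q.2 / q.2 !)) :=
    ((summable_geometric_of_lt_one (by positivity) hBR).mul_of_nonneg
      (Real.summable_pow_div_factorial _) (fun _ => by positivity)
      fun _ => by positivity).mul_left C
  refine hmajorant.of_norm_bounded ?_
  rintro ⟨j, k⟩
  have hCjk : |R ^ (j + k) / poch g (j + k)| ≤ C := hC ⟨j + k, rfl⟩
  calc ‖phi3Term b g z w j k‖
      = |poch b j| / j ! * |z| ^ j * (|w| ^ k / k !) / |poch g (j + k)| := by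
        simp only [phi3Term, Real.norm_eq_abs, abs_div, abs_mul, abs_pow, Nat.abs_cast]
        ring
    _ ≤ B ^ j * (|w| ^ k / k !) / |poch g (j + k)| := by
        gcongr
        rw [mul_pow, div_mul_eq_mul_div, div_le_iff₀ (by positivity), mul_right_comm]
        gcongr
        exact abs_poch_le b j
    _ = (B / R) ^ j * ((|w| / R) ^ k / k !) * |R ^ (j + k) / poch g (j + k)| := by
        rw [abs_div, abs_pow, abs_of_pos hR, div_pow, div_pow, pow_add]
        field_simp
    _ ≤ C * ((B / R) ^ j * ((|w| / R) ^ k / k !)) := by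
        rw [mul_comm C]
        gcongr

lemma besselI_two_mul_sqrt (ν : ℝ) {w : ℝ} (hw : 0 < w) :
    besselI ν (2 * √w) = √w ^ ν * ∑' k : ℕ, w ^ k / (Gamma (ν + k + 1) * k !) := by
  rw [besselI, ← tsum_mul_left]
  refine tsum_congr fun k => ?_
  have hsq : √w ^ (2 * (k : ℝ)) = w ^ k := by
    rw [show 2 * (k : ℝ) = ((2 * k : ℕ) : ℝ) by push_cast; ring, rpow_natCast, pow_mul,
      sq_sqrt hw.le]
  rw [mul_div_cancel_left₀ _ two_ne_zero, rpow_add (sqrt_pos.2 hw), hsq]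
  ring

lemma tsum_phi3Term_eq {g w : ℝ} (hg : ∀ n : ℕ, g ≠ -(n : ℝ)) (hw : 0 < w) (b z : ℝ)
    (j : ℕ) :
    ∑' k, phi3Term b g z w j k =
      Gamma g * w ^ ((1 - g) / 2) *
        (poch b j / j ! * (z / √w) ^ j * besselI (g + j - 1) (2 * √w)) := by
  have hs : 0 < √w := sqrt_pos.2 hw
  have hprefactor : w ^ ((1 - g) / 2) * (z / √w) ^ j * √w ^ (g + j - 1) = z ^ j := by
    have hrpow : w ^ ((1 - g) / 2) = √w ^ (1 - g) := by
      rw [sqrt_eq_rpow, ← rpow_mul hw.le]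
      ring_nf
    rw [hrpow, mul_right_comm, ← rpow_add hs, show 1 - g + (g + j - 1) = (j : ℝ) by ring,
      rpow_natCast, div_pow]
    field_simp
  have hterm : ∀ k, phi3Term b g z w j k =
      poch b j / j ! * z ^ j * (Gamma g * (w ^ k / (Gamma (g + j - 1 + k + 1) * k !))) := by
    intro k
    rw [show g + j - 1 + k + 1 = g + ((j + k : ℕ) : ℝ) by push_cast; ring,
      Gamma_add_natCast_eq_poch_mul hg, phi3Term]
    field_simp [Gamma_ne_zero hg, poch_ne_zero hg]
  rw [tsum_congr hterm, tsum_mul_left, tsum_mul_left, besselI_two_mul_sqrt _ hw, ← hprefactor]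
  ring

/-- Expansion of Φ₃ in terms of modified Bessel functions of the first kind. -/
theorem phi3_besselI_expansion (b g z w : ℝ) (hg : ∀ n : ℕ, g ≠ -(n : ℝ)) (hw : 0 < w) :
    phi3 b g z w =
      Real.Gamma g * w ^ ((1 - g) / 2) *
        ∑' j : ℕ, poch b j / (Nat.factorial j) * (z / Real.sqrt w) ^ j *
          besselI (g + j - 1) (2 * Real.sqrt w) := by
  calc phi3 b g z w = ∑' j, ∑' k, phi3Term b g z w j k := (summable_phi3Term hg b z w).tsum_prod
    _ = _ := by
      rw [← tsum_mul_left]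
      exact tsum_congr (tsum_phi3Term_eq hg hw b z)
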